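/- The three-variable exponential generating function \sum_{l,m,n\ge 0} \mathscr{B}_m^{(-l)}(n) x^l y^m z^n/(l! m! n!) equals e^{x+y}/(e^x + e^y - e^{x+y} - z). -/

import Mathlib

open PowerSeries Finset

/-- Unsigned Stirling numbers of the first kind. -/
def stirling1 : ℕ → ℕ → ℕ
  | 0, 0 => 1
  | 0, _ + 1 => 0
  | _ + 1, 0 => 0
  | n + 1, m + 1 => stirling1 n m + n * stirling1 n (m + 1)

/-- Stirling numbers of the second kind. -/
def stirling2 : ℕ → ℕ → ℕ
  | 0, 0 => 1
  | 0, _ + 1 => 0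
  | _ + 1, 0 => 0
  | n + 1, m + 1 => stirling2 n m + (m + 1) * stirling2 n (m + 1)

/-- e^t as a formal power series over ℚ. -/
noncomputable def expQ : PowerSeries ℚ := PowerSeries.exp ℚ

/-- e^{-t} as a formal power series over ℚ. -/
noncomputable def expNegQ : PowerSeries ℚ := rescale (-1) expQ

/-- The formal power series Li_k(1-e^{-t})/(1-e^{-t}) = ∑_{m≥0} (m+1)^{-k} (1-e^{-t})^m,
  defined coefficientwise (the tail vanishes since (1-e^{-t})^m has order m). -/
noncomputable def liEGF (k : ℤ) : PowerSeries ℚ :=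
  PowerSeries.mk fun j =>
    ∑ m ∈ range (j + 1), ((m : ℚ) + 1) ^ (-k) * coeff j ((1 - expNegQ) ^ m)

/-- EGF of the poly-Bernoulli polynomials: e^{-xt} Li_k(1-e^{-t})/(1-e^{-t}). -/
noncomputable def pbEGF (k : ℤ) (x : ℚ) : PowerSeries ℚ := rescale (-x) expQ * liEGF k

/-- Poly-Bernoulli polynomial value B_m^{(k)}(x). -/
noncomputable def pbPoly (k : ℤ) (x : ℚ) (m : ℕ) : ℚ := m.factorial * coeff m (pbEGF k x)

/-- Poly-Bernoulli number B_m^{(k)}. -/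
noncomputable def pbB (k : ℤ) (m : ℕ) : ℚ := pbPoly k 0 m

/-- Poly-Bernoulli number C_m^{(k)}. -/
noncomputable def pbC (k : ℤ) (m : ℕ) : ℚ := pbPoly k 1 m

/-- 𝓑_m^{(-l)}(n) = ∑_{j=0}^n [n j] B_m^{(-l-j)}(n). -/
noncomputable def scrB (l m n : ℕ) : ℚ :=
  ∑ j ∈ range (n + 1), (stirling1 n j : ℚ) * pbPoly (-(l : ℤ) - j) n m

/-- e^x, viewed in ℚ[[x]][[y]][[z]]. -/
noncomputable def eX3 : PowerSeries (PowerSeries (PowerSeries ℚ)) :=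
  PowerSeries.C (PowerSeries.C expQ)

/-- e^y, viewed in ℚ[[x]][[y]][[z]]. -/
noncomputable def eY3 : PowerSeries (PowerSeries (PowerSeries ℚ)) :=
  PowerSeries.C (PowerSeries.exp (PowerSeries ℚ))

/-!
Unfolding the definitions, `B_m^{(-l-j)}(n) = m! ∑_i (i+1)^(l+j) [t^m] e^(-nt) (1-e^(-t))^i`, and
`∑_j [n j] (i+1)^j = (i+1)(i+2)⋯(i+n) = n! C(i+n, n)`. Summing over `l` and `m`, the coefficient
of `z^n` is `L_n = e^x e^(-ny) ∑_i C(i+n, n) w^i = e^x e^(-ny) (1-w)^(-n-1)` with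
`w = e^x (1 - e^(-y))`. Since `e^x + e^y - e^(x+y) = e^y (1 - w)`, this gives
`L_(n+1) (e^x + e^y - e^(x+y)) = L_n` and `L_0 (e^x + e^y - e^(x+y)) = e^(x+y)`, i.e. the triple
series times `e^x + e^y - e^(x+y) - z` is `e^(x+y)`. As `y ∣ w`, the partial sums over `i < N`
agree with `L_n` modulo `y^N`, so only the finite identity
`(∑_{i<N} C(i+n+1, n+1) w^i) (1 - w) = ∑_{i<N} C(i+n, n) w^i - C(N+n, n+1) w^N` is needed.
-/

open scoped Nat

namespace PowerSeries

theorem coeff_eq_of_X_pow_dvd_sub {R : Type*} [Ring R] {N m : ℕ} {f g : R⟦X⟧}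
    (h : X ^ N ∣ f - g) (hm : m < N) : coeff m f = coeff m g := by
  rw [← sub_eq_zero, ← map_sub]
  exact X_pow_dvd_iff.mp h m hm

theorem eq_of_forall_X_pow_dvd_sub {R : Type*} [Ring R] {f g : R⟦X⟧}
    (h : ∀ N, X ^ N ∣ f - g) : f = g :=
  ext fun m => coeff_eq_of_X_pow_dvd_sub (h (m + 1)) m.lt_succ_self

end PowerSeries

theorem stirling1_eq_stirlingFirst : stirling1 = Nat.stirlingFirst := by
  funext n k
  induction n generalizing k with
  | zero => cases k <;> rfl
  | succ n ih =>
    cases k with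
    | zero => rfl
    | succ k => rw [stirling1, Nat.stirlingFirst_succ_succ, ih, ih, add_comm]

theorem Nat.sum_stirlingFirst_mul_pow {R : Type*} [CommSemiring R] (n : ℕ) (w : R) :
    ∑ j ∈ range (n + 1), (stirlingFirst n j : R) * w ^ j = ∏ k ∈ range n, (w + k) := by
  induction n with
  | zero => simp
  | succ n ih =>
    set A := ∑ j ∈ range (n + 1), (stirlingFirst n (j + 1) : R) * w ^ (j + 1)
    have hshift : A + stirlingFirst n 0 = ∏ k ∈ range n, (w + k) := by
      have := sum_range_succ' (fun j => (stirlingFirst n j : R) * w ^ j) (n + 1)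
      rw [sum_range_succ, stirlingFirst_eq_zero_of_lt n.lt_succ_self, ih] at this
      simpa using this.symm
    have hzero : (n : R) * stirlingFirst n 0 = 0 := by cases n <;> simp
    calc ∑ j ∈ range (n + 1 + 1), (stirlingFirst (n + 1) j : R) * w ^ j
        = n * A + (∑ j ∈ range (n + 1), (stirlingFirst n j : R) * w ^ j) * w := by
          simp only [sum_range_succ' _ (n + 1), stirlingFirst_succ_succ, stirlingFirst_succ_zero,
            Nat.cast_add, Nat.cast_mul, Nat.cast_zero, zero_mul, add_zero, add_mul,
            sum_add_distrib, A, mul_sum, sum_mul, mul_assoc, pow_succ]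
      _ = (A + stirlingFirst n 0) * w + (n * A + n * stirlingFirst n 0) := by
          rw [ih, ← hshift, hzero, add_zero, add_comm]
      _ = ∏ k ∈ range (n + 1), (w + k) := by rw [prod_range_succ, ← hshift]; ring

theorem sum_choose_succ_mul_pow_mul_one_sub {R : Type*} [CommRing R] (N n : ℕ) (w : R) :
    (∑ i ∈ range N, ((i + (n + 1)).choose (n + 1) : R) * w ^ i) * (1 - w) =
      ∑ i ∈ range N, ((i + n).choose n : R) * w ^ i - ((N + n).choose (n + 1) : R) * w ^ N := by
  induction N with
  | zero => simp
  | succ N ih =>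
    have h := Nat.choose_succ_succ' (N + n) n
    rw [sum_range_succ, sum_range_succ, add_mul, ih, ← add_assoc, add_right_comm N 1 n, h]
    push_cast
    ring

namespace PolyBernoulli

theorem X_dvd_one_sub_expNegQ : X ∣ 1 - expNegQ := by
  rw [X_dvd_iff, map_sub, map_one, expNegQ, expQ, ← coeff_zero_eq_constantCoeff_apply,
    coeff_rescale, coeff_exp]
  simp

theorem coeff_one_sub_expNegQ_pow_of_lt {m i : ℕ} (h : m < i) :
    coeff m ((1 - expNegQ) ^ i) = 0 :=
  X_pow_dvd_iff.mp (pow_dvd_pow_of_dvd X_dvd_one_sub_expNegQ i) m h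

theorem rescale_neg_natCast_expQ (n : ℕ) : rescale (-(n : ℚ)) expQ = expNegQ ^ n := by
  rw [expNegQ, ← map_pow, expQ, exp_pow_eq_rescale_exp, rescale_rescale, mul_neg_one]

theorem X_pow_dvd_liEGF_sub (k : ℤ) (N : ℕ) :
    X ^ N ∣ liEGF k - ∑ i ∈ range N, C (((i : ℚ) + 1) ^ (-k)) * (1 - expNegQ) ^ i := by
  refine X_pow_dvd_iff.mpr fun m hm => ?_
  rw [map_sub, sub_eq_zero, liEGF, coeff_mk, map_sum]
  simp_rw [coeff_C_mul]
  refine sum_subset (range_subset_range.mpr hm) fun i _ hi => ?_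
  rw [coeff_one_sub_expNegQ_pow_of_lt (by rw [mem_range, not_lt] at hi; exact hi), mul_zero]

theorem pbPoly_eq_sum {N m : ℕ} (hm : m < N) (k : ℤ) (x : ℚ) :
    pbPoly k x m = m ! * ∑ i ∈ range N,
      ((i : ℚ) + 1) ^ (-k) * coeff m (rescale (-x) expQ * (1 - expNegQ) ^ i) := by
  have h := dvd_mul_of_dvd_right (X_pow_dvd_liEGF_sub k N) (rescale (-x) expQ)
  rw [mul_sub] at h
  rw [pbPoly, pbEGF, coeff_eq_of_X_pow_dvd_sub h hm, mul_sum, map_sum]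
  simp_rw [mul_left_comm _ (C _), coeff_C_mul]

theorem prod_add_natCast_eq_factorial_mul_choose {R : Type*} [CommSemiring R] (i n : ℕ) :
    ∏ k ∈ range n, ((i : R) + 1 + k) = n ! * (i + n).choose n := by
  have h := congrArg (Nat.cast : ℕ → R) ((Nat.ascFactorial_eq_prod_range (i + 1) n).symm.trans
    (Nat.ascFactorial_eq_factorial_mul_choose i n))
  push_cast at h
  exact h

theorem scrB_eq_sum {N m : ℕ} (hm : m < N) (l n : ℕ) :
    scrB l m n = m ! * n ! * ∑ i ∈ range N, ((i + n).choose n : ℚ) * ((i : ℚ) + 1) ^ l *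
      coeff m (expNegQ ^ n * (1 - expNegQ) ^ i) := by
  have hpow : ∀ i j : ℕ,
      ((i : ℚ) + 1) ^ (-(-(l : ℤ) - j)) = ((i : ℚ) + 1) ^ j * ((i : ℚ) + 1) ^ l := by
    intro i j
    rw [neg_sub, sub_neg_eq_add, zpow_add₀ (by positivity), zpow_natCast, zpow_natCast]
  simp_rw [scrB, stirling1_eq_stirlingFirst, pbPoly_eq_sum hm, rescale_neg_natCast_expQ, hpow,
    mul_sum]
  rw [sum_comm]
  refine sum_congr rfl fun i _ => ?_
  have hstir := Nat.sum_stirlingFirst_mul_pow n ((i : ℚ) + 1)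
  rw [prod_add_natCast_eq_factorial_mul_choose] at hstir
  calc _ = ↑m ! * (∑ j ∈ range (n + 1), (n.stirlingFirst j : ℚ) * ((i : ℚ) + 1) ^ j) *
        (((i : ℚ) + 1) ^ l * coeff m (expNegQ ^ n * (1 - expNegQ) ^ i)) := by
        rw [mul_sum, sum_mul]
        exact sum_congr rfl fun j _ => by ring
    _ = _ := by rw [hstir]; ring

/- In `ℚ⟦X⟧⟦X⟧` the inner variable is `x` and the outer one `y`: `ratio` is `e^x (1 - e^(-y))`,
`denom` is `e^x + e^y - e^(x+y)`, and `scrBSeries n` is the `z^n`-coefficient of the triple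
series. -/
noncomputable def ratio : ℚ⟦X⟧⟦X⟧ := C expQ * map C (1 - expNegQ)

noncomputable def denom : ℚ⟦X⟧⟦X⟧ := C expQ + exp ℚ⟦X⟧ - C expQ * exp ℚ⟦X⟧

noncomputable def scrBSeries (n : ℕ) : ℚ⟦X⟧⟦X⟧ :=
  mk fun m => mk fun l => scrB l m n / ((l.factorial : ℚ) * m.factorial * n.factorial)

noncomputable def partialSeries (N n : ℕ) : ℚ⟦X⟧⟦X⟧ :=
  C expQ * map C (expNegQ ^ n) * ∑ i ∈ range N, ((i + n).choose n : ℚ⟦X⟧⟦X⟧) * ratio ^ i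

theorem map_C_expNegQ_mul_exp : map C expNegQ * exp ℚ⟦X⟧ = 1 := by
  rw [expNegQ, expQ, ← rescale_map, map_exp, mul_comm, map_neg, map_one]
  exact exp_mul_exp_neg_eq_one

theorem exp_mul_one_sub_ratio : exp ℚ⟦X⟧ * (1 - ratio) = denom := by
  rw [denom, ratio, map_sub, map_one]
  linear_combination C expQ * map_C_expNegQ_mul_exp

theorem X_pow_dvd_ratio_pow (N : ℕ) : X ^ N ∣ ratio ^ N := by
  refine pow_dvd_pow_of_dvd (dvd_mul_of_dvd_right ?_ _) N
  simpa only [map_X] using map_dvd (PowerSeries.map C) X_dvd_one_sub_expNegQ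

theorem partialSeries_succ_mul_denom (N n : ℕ) :
    partialSeries N (n + 1) * denom = partialSeries N n -
      ((N + n).choose (n + 1) : ℚ⟦X⟧⟦X⟧) * (C expQ * map C (expNegQ ^ n)) * ratio ^ N := by
  rw [← exp_mul_one_sub_ratio, partialSeries, partialSeries, pow_succ, map_mul]
  linear_combination (C expQ * map C (expNegQ ^ n) *
      (∑ i ∈ range N, ((i + (n + 1)).choose (n + 1) : ℚ⟦X⟧⟦X⟧) * ratio ^ i) * (1 - ratio)) *
      map_C_expNegQ_mul_exp +
    C expQ * map C (expNegQ ^ n) * sum_choose_succ_mul_pow_mul_one_sub N n ratio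

theorem partialSeries_zero_mul_denom (N : ℕ) :
    partialSeries N 0 * denom = C expQ * exp ℚ⟦X⟧ * (1 - ratio ^ N) := by
  rw [← exp_mul_one_sub_ratio, partialSeries, ← geom_sum_mul_neg]
  simp only [pow_zero, map_one, mul_one, add_zero, Nat.choose_zero_right, Nat.cast_one, one_mul]
  ring

theorem coeff_expQ_pow (i l : ℕ) : coeff l (expQ ^ i) = (i : ℚ) ^ l / l ! := by
  rw [expQ, exp_pow_eq_rescale_exp, coeff_rescale, coeff_exp, Algebra.algebraMap_self_apply,
    mul_one_div]

theorem coeff_coeff_partialSeries (N n m l : ℕ) :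
    coeff l (coeff m (partialSeries N n)) = ∑ i ∈ range N, ((i + n).choose n : ℚ) *
      (((i : ℚ) + 1) ^ l / l !) * coeff m (expNegQ ^ n * (1 - expNegQ) ^ i) := by
  have hterm : ∀ i, C expQ * map C (expNegQ ^ n) * (((i + n).choose n : ℚ⟦X⟧⟦X⟧) * ratio ^ i) =
      C (C ((i + n).choose n : ℚ) * expQ ^ (i + 1)) * map C (expNegQ ^ n * (1 - expNegQ) ^ i) := by
    intro i
    simp only [ratio, map_mul, map_pow, map_natCast]
    ring
  simp only [partialSeries, mul_sum, hterm, map_sum, coeff_C_mul, coeff_map, coeff_mul_C,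
    coeff_expQ_pow, Nat.cast_succ]

theorem X_pow_dvd_scrBSeries_sub_partialSeries (N n : ℕ) :
    X ^ N ∣ scrBSeries n - partialSeries N n := by
  refine X_pow_dvd_iff.mpr fun m hm => ?_
  rw [map_sub, sub_eq_zero]
  ext l
  rw [coeff_coeff_partialSeries, scrBSeries, coeff_mk, coeff_mk, scrB_eq_sum hm,
    div_eq_iff (by positivity), sum_mul, mul_sum]
  refine sum_congr rfl fun i _ => ?_
  field_simp

theorem scrBSeries_succ_mul_denom (n : ℕ) : scrBSeries (n + 1) * denom = scrBSeries n := by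
  refine eq_of_forall_X_pow_dvd_sub fun N => ?_
  have h : scrBSeries (n + 1) * denom - scrBSeries n =
      (scrBSeries (n + 1) - partialSeries N (n + 1)) * denom -
        (scrBSeries n - partialSeries N n) -
        ((N + n).choose (n + 1) : ℚ⟦X⟧⟦X⟧) * (C expQ * map C (expNegQ ^ n)) * ratio ^ N := by
    linear_combination partialSeries_succ_mul_denom N n
  rw [h]
  exact dvd_sub (dvd_sub (dvd_mul_of_dvd_left (X_pow_dvd_scrBSeries_sub_partialSeries N _) _)
    (X_pow_dvd_scrBSeries_sub_partialSeries N n)) (dvd_mul_of_dvd_right (X_pow_dvd_ratio_pow N) _)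

theorem scrBSeries_zero_mul_denom : scrBSeries 0 * denom = C expQ * exp ℚ⟦X⟧ := by
  refine eq_of_forall_X_pow_dvd_sub fun N => ?_
  have h : scrBSeries 0 * denom - C expQ * exp ℚ⟦X⟧ =
      (scrBSeries 0 - partialSeries N 0) * denom - C expQ * exp ℚ⟦X⟧ * ratio ^ N := by
    linear_combination partialSeries_zero_mul_denom N
  rw [h]
  exact dvd_sub (dvd_mul_of_dvd_left (X_pow_dvd_scrBSeries_sub_partialSeries N 0) _)
    (dvd_mul_of_dvd_right (X_pow_dvd_ratio_pow N) _)

theorem mk_scrBSeries_mul_C_denom_sub_X :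
    mk scrBSeries * (C denom - X) = C (C expQ * exp ℚ⟦X⟧) := by
  ext (_ | n)
  · simp [scrBSeries_zero_mul_denom]
  · simp [mul_sub, coeff_succ_mul_X, scrBSeries_succ_mul_denom]

theorem isUnit_C_denom_sub_X : IsUnit (C denom - X) := by
  rw [isUnit_iff_constantCoeff, map_sub, constantCoeff_C, constantCoeff_X, sub_zero,
    isUnit_iff_constantCoeff]
  simp [denom, expQ]

end PolyBernoulli

/-- ∑_{l,m,n} 𝓑_m^{(-l)}(n) x^l y^m z^n/(l!m!n!) = e^{x+y}/(e^x+e^y-e^{x+y}-z). -/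
theorem scrB_triple_egf :
    (PowerSeries.mk fun n => PowerSeries.mk fun m => PowerSeries.mk fun l =>
        scrB l m n / ((l.factorial : ℚ) * m.factorial * n.factorial) :
        PowerSeries (PowerSeries (PowerSeries ℚ))) =
      eX3 * eY3 * Ring.inverse (eX3 + eY3 - eX3 * eY3 - X) := by
  have hdenom : eX3 + eY3 - eX3 * eY3 - X = C PolyBernoulli.denom - X := by
    simp [eX3, eY3, PolyBernoulli.denom]
  have hnum : eX3 * eY3 = C (C expQ * exp ℚ⟦X⟧) := by simp [eX3, eY3]
  rw [hdenom, hnum, Ring.eq_mul_inverse_iff_mul_eq _ _ _ PolyBernoulli.isUnit_C_denom_sub_X]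
  exact PolyBernoulli.mk_scrBSeries_mul_C_denom_sub_X
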